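/- Let θ : Ω → ℝ_{>0} be C¹ on a bounded interval Ω, let b > 0, 0 ≤ m ≤ (b+4)/2, and suppose there exists b₀ ∈ Ω with θ(b₀) ≤ B. If ∫_Ω v(x) dx ≤ M₁, ∫_Ω (θ(x)-1)⁴ dx ≤ M₂ and v(x) ≥ V₁ > 0 on Ω, then |θ(x)^m - θ(b₀)^m| ≤ C · (∫_Ω κ(v,θ)θ_x²/(vθ²) dx)^{1/2} for all x ∈ Ω, where κ(v,θ) = κ₁ + κ₂vθ^b and C depends only on m, b, κ₁, κ₂, B, M₁, M₂, V₁ and |Ω|. -/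

import Mathlib

open MeasureTheory Set

/-!
Write `κ = κ₁ + κ₂ v θ^b`. By the fundamental theorem of calculus,
`|θ(x)^m - θ(b₀)^m| ≤ m ∫ θ^(m-1) |θ_x|`, and since
`(θ^(m-1) |θ_x|)² = (v θ^(2m) / κ) · (κ θ_x² / (v θ²))`, the Cauchy–Schwarz inequality bounds this
by `m (∫ v θ^(2m) / κ)^(1/2)` times the square root of the dissipation. The first factor is
controlled pointwise: where `θ ≤ 2` drop the `κ₂`-term of `κ`, where `θ > 2` drop the `κ₁`-term,
leaving `θ^(2m-b) ≤ θ^4 ≤ 16 (θ-1)^4` because `2m - b ≤ 4`; integrating gives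
`∫ v θ^(2m) / κ ≤ 4^m M₁ / κ₁ + 16 M₂ / κ₂`.
-/

theorem rpow_le_sixteen_mul_sub_one_pow_four {θ q : ℝ} (hθ : 2 ≤ θ) (hq : q ≤ 4) :
    θ ^ q ≤ 16 * (θ - 1) ^ 4 :=
  calc θ ^ q ≤ θ ^ (4 : ℕ) := by
        rw [← Real.rpow_natCast]; exact Real.rpow_le_rpow_of_exponent_le (by linarith) (by simpa)
    _ ≤ (2 * (θ - 1)) ^ 4 := pow_le_pow_left₀ (by linarith) (by linarith) 4
    _ = 16 * (θ - 1) ^ 4 := by ring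

theorem mul_rpow_div_add_le {κ₁ κ₂ b p v θ : ℝ} (hp0 : 0 ≤ p) (hp : p ≤ b + 4)
    (hκ₁ : 0 < κ₁) (hκ₂ : 0 < κ₂) (hv : 0 ≤ v) (hθ : 0 < θ) :
    v * θ ^ p / (κ₁ + κ₂ * v * θ ^ b) ≤ 2 ^ p / κ₁ * v + 16 / κ₂ * (θ - 1) ^ 4 := by
  have hθb : 0 < θ ^ b := Real.rpow_pos_of_pos hθ b
  have hθp : 0 < θ ^ p := Real.rpow_pos_of_pos hθ p
  rcases le_or_gt θ 2 with hθ2 | hθ2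
  · calc v * θ ^ p / (κ₁ + κ₂ * v * θ ^ b) ≤ v * 2 ^ p / κ₁ := by
          gcongr
          exact le_add_of_nonneg_right (by positivity)
    _ = 2 ^ p / κ₁ * v := by ring
    _ ≤ 2 ^ p / κ₁ * v + 16 / κ₂ * (θ - 1) ^ 4 := le_add_of_nonneg_right (by positivity)
  · calc v * θ ^ p / (κ₁ + κ₂ * v * θ ^ b) ≤ θ ^ (p - b) / κ₂ := by
          rw [div_le_div_iff₀ (by positivity) hκ₂, Real.rpow_sub hθ, div_mul_eq_mul_div,
            le_div_iff₀ hθb]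
          nlinarith [mul_pos hθp hκ₁]
    _ ≤ 16 * (θ - 1) ^ 4 / κ₂ := by
          gcongr; exact rpow_le_sixteen_mul_sub_one_pow_four hθ2.le (by linarith)
    _ ≤ 2 ^ p / κ₁ * v + 16 / κ₂ * (θ - 1) ^ 4 := by
          rw [mul_div_right_comm]; exact le_add_of_nonneg_left (by positivity)

theorem rpow_sub_one_mul_abs_sq {m κ v θ θ' : ℝ} (hκ : κ ≠ 0) (hv : v ≠ 0) (hθ : 0 < θ) :
    (θ ^ (m - 1) * |θ'|) ^ 2 = v * θ ^ (2 * m) / κ * (κ * θ' ^ 2 / (v * θ ^ 2)) := by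
  have h2m : θ ^ (2 * m) = (θ ^ (m - 1)) ^ 2 * θ ^ 2 := by
    rw [← Real.rpow_mul_natCast hθ.le, ← Real.rpow_natCast θ 2, ← Real.rpow_add hθ]
    ring_nf
  rw [h2m, mul_pow, sq_abs]
  field_simp

theorem integral_le_sqrt_mul_sqrt_of_sq_le_mul {α : Type*} [MeasurableSpace α] {μ : Measure α}
    {h P Q : α → ℝ} (hP : Integrable P μ) (hQ : Integrable Q μ)
    (hP0 : 0 ≤ᵐ[μ] P) (hQ0 : 0 ≤ᵐ[μ] Q) (hhPQ : ∀ᵐ x ∂μ, h x ^ 2 ≤ P x * Q x) :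
    ∫ x, h x ∂μ ≤ √(∫ x, P x ∂μ) * √(∫ x, Q x ∂μ) := by
  by_cases hh : Integrable h μ
  swap
  · -- a non-integrable `h` has Bochner integral `0`
    rw [integral_undef hh]; positivity
  have sqrt_memLp : ∀ {F : α → ℝ}, Integrable F μ → 0 ≤ᵐ[μ] F →
      MemLp (fun x => √(F x)) 2 μ := fun hF hF0 => by
    rw [memLp_two_iff_integrable_sq
      (Real.continuous_sqrt.comp_aestronglyMeasurable hF.aestronglyMeasurable)]
    refine hF.congr ?_
    filter_upwards [hF0] with x hx using (Real.sq_sqrt hx).symm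
  have integral_sqrt_rpow_two : ∀ {F : α → ℝ}, 0 ≤ᵐ[μ] F →
      (∫ x, √(F x) ^ (2 : ℝ) ∂μ) ^ (1 / (2 : ℝ)) = √(∫ x, F x ∂μ) := fun hF0 => by
    rw [← Real.sqrt_eq_rpow]
    refine congrArg _ (integral_congr_ae ?_)
    filter_upwards [hF0] with x hx
    rw [Real.rpow_two, Real.sq_sqrt hx]
  have hP2 := sqrt_memLp hP hP0
  have hQ2 := sqrt_memLp hQ hQ0
  calc ∫ x, h x ∂μ ≤ ∫ x, √(P x) * √(Q x) ∂μ := by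
        refine integral_mono_ae hh (hP2.integrable_mul hQ2) ?_
        filter_upwards [hhPQ, hP0] with x hx hPx
        rw [← Real.sqrt_mul hPx]
        exact Real.le_sqrt_of_sq_le hx
    _ ≤ √(∫ x, P x ∂μ) * √(∫ x, Q x ∂μ) := by
        have := integral_mul_le_Lp_mul_Lq_of_nonneg Real.HolderConjugate.two_two
          (.of_forall fun x => Real.sqrt_nonneg (P x)) (.of_forall fun x => Real.sqrt_nonneg (Q x))
          (by rwa [ENNReal.ofReal_ofNat]) (by rwa [ENNReal.ofReal_ofNat])
        rwa [integral_sqrt_rpow_two hP0, integral_sqrt_rpow_two hQ0] at this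

theorem abs_sub_le_setIntegral_Icc_abs_deriv {f f' : ℝ → ℝ} {a c x y : ℝ}
    (hf : ∀ t ∈ Icc a c, HasDerivAt f (f' t) t) (hf' : IntegrableOn f' (Icc a c))
    (hx : x ∈ Icc a c) (hy : y ∈ Icc a c) :
    |f x - f y| ≤ ∫ t in Icc a c, |f' t| := by
  have hsub : uIcc y x ⊆ Icc a c := uIcc_subset_Icc hy hx
  rw [← intervalIntegral.integral_eq_sub_of_hasDerivAt (fun t ht => hf t (hsub ht))
    ((hf'.mono_set hsub).intervalIntegrable)]
  refine (intervalIntegral.norm_integral_le_integral_norm_uIoc (f := f')).trans ?_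
  exact setIntegral_mono_set hf'.norm (.of_forall fun t => norm_nonneg _)
    (uIoc_subset_uIcc.trans hsub).eventuallyLE

theorem integrable_and_integral_mul_rpow_div_add_le {α : Type*} [MeasurableSpace α]
    {μ : Measure α} {κ₁ κ₂ b p : ℝ} {v θ : α → ℝ} (hp0 : 0 ≤ p) (hp : p ≤ b + 4)
    (hκ₁ : 0 < κ₁) (hκ₂ : 0 < κ₂) (hv0 : ∀ᵐ x ∂μ, 0 ≤ v x) (hθ0 : ∀ᵐ x ∂μ, 0 < θ x)
    (hv : Integrable v μ) (hθ : AEMeasurable θ μ)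
    (hθ4 : Integrable (fun x => (θ x - 1) ^ 4) μ) :
    Integrable (fun x => v x * θ x ^ p / (κ₁ + κ₂ * v x * θ x ^ b)) μ ∧
      ∫ x, v x * θ x ^ p / (κ₁ + κ₂ * v x * θ x ^ b) ∂μ ≤
        2 ^ p / κ₁ * ∫ x, v x ∂μ + 16 / κ₂ * ∫ x, (θ x - 1) ^ 4 ∂μ := by
  have hW : Integrable (fun x => 2 ^ p / κ₁ * v x + 16 / κ₂ * (θ x - 1) ^ 4) μ :=
    (hv.const_mul _).add (hθ4.const_mul _)
  have hP : Integrable (fun x => v x * θ x ^ p / (κ₁ + κ₂ * v x * θ x ^ b)) μ := by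
    have hvm := hv.aemeasurable
    refine hW.mono' (by fun_prop : AEMeasurable _ μ).aestronglyMeasurable ?_
    filter_upwards [hv0, hθ0] with x hvx hθx
    rw [Real.norm_of_nonneg (by positivity)]
    exact mul_rpow_div_add_le hp0 hp hκ₁ hκ₂ hvx hθx
  refine ⟨hP, (integral_mono_ae hP hW ?_).trans_eq ?_⟩
  · filter_upwards [hv0, hθ0] with x hvx hθx
    exact mul_rpow_div_add_le hp0 hp hκ₁ hκ₂ hvx hθx
  · rw [integral_add (hv.const_mul _) (hθ4.const_mul _), integral_const_mul,
      integral_const_mul]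

theorem integrableOn_conductivity_mul_sq_div {a c κ₁ κ₂ b V₁ : ℝ} {v θ θ' : ℝ → ℝ}
    (hκ₁ : 0 ≤ κ₁) (hκ₂ : 0 ≤ κ₂) (hV₁ : 0 < V₁) (hv : ∀ x ∈ Icc a c, V₁ ≤ v x)
    (hvm : AEMeasurable v (volume.restrict (Icc a c))) (hθ : ContinuousOn θ (Icc a c))
    (hθ0 : ∀ x ∈ Icc a c, 0 < θ x) (hθ' : ContinuousOn θ' (Icc a c)) :
    IntegrableOn (fun x => (κ₁ + κ₂ * v x * θ x ^ b) * θ' x ^ 2 / (v x * θ x ^ 2))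
      (Icc a c) := by
  have hne : ∀ x ∈ Icc a c, θ x ≠ 0 := fun x hx => (hθ0 x hx).ne'
  have hg :
      IntegrableOn (fun x => (κ₁ / V₁ + κ₂ * θ x ^ b) * θ' x ^ 2 / θ x ^ 2) (Icc a c) :=
    (((continuousOn_const.add (continuousOn_const.mul
      (hθ.rpow_const fun x hx => Or.inl (hne x hx)))).mul (hθ'.pow 2)).div (hθ.pow 2)
      fun x hx => pow_ne_zero 2 (hne x hx)).integrableOn_Icc
  have hθm := hθ.aemeasurable (μ := volume) measurableSet_Icc
  have hθ'm := hθ'.aemeasurable (μ := volume) measurableSet_Icc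
  refine hg.mono' (by fun_prop : AEMeasurable _ _).aestronglyMeasurable ?_
  filter_upwards [ae_restrict_mem measurableSet_Icc] with x hx
  have hvx : 0 < v x := hV₁.trans_le (hv x hx)
  have hθx := hθ0 x hx
  rw [Real.norm_of_nonneg (by positivity)]
  calc (κ₁ + κ₂ * v x * θ x ^ b) * θ' x ^ 2 / (v x * θ x ^ 2)
      = (κ₁ / v x + κ₂ * θ x ^ b) * θ' x ^ 2 / θ x ^ 2 := by field_simp
    _ ≤ (κ₁ / V₁ + κ₂ * θ x ^ b) * θ' x ^ 2 / θ x ^ 2 := by gcongr; exact hv x hx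

theorem setIntegral_rpow_sub_one_mul_abs_le {α : Type*} [MeasurableSpace α] {μ : Measure α}
    {s : Set α} (hs : MeasurableSet s) {m : ℝ} {κ v θ θ' : α → ℝ} (hκ : ∀ x ∈ s, 0 < κ x)
    (hv : ∀ x ∈ s, 0 < v x) (hθ : ∀ x ∈ s, 0 < θ x)
    (hP : IntegrableOn (fun x => v x * θ x ^ (2 * m) / κ x) s μ)
    (hQ : IntegrableOn (fun x => κ x * θ' x ^ 2 / (v x * θ x ^ 2)) s μ) :
    ∫ x in s, θ x ^ (m - 1) * |θ' x| ∂μ ≤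
      √(∫ x in s, v x * θ x ^ (2 * m) / κ x ∂μ) *
        √(∫ x in s, κ x * θ' x ^ 2 / (v x * θ x ^ 2) ∂μ) := by
  have hs' : ∀ᵐ x ∂μ.restrict s, x ∈ s := ae_restrict_mem hs
  refine integral_le_sqrt_mul_sqrt_of_sq_le_mul hP hQ ?_ ?_ ?_ <;>
    filter_upwards [hs'] with x hx
  · have := hκ x hx; have := hv x hx; have := hθ x hx
    positivity
  · have := hκ x hx; have := hv x hx; have := hθ x hx
    positivity
  · exact (rpow_sub_one_mul_abs_sq (hκ x hx).ne' (hv x hx).ne' (hθ x hx)).le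

theorem abs_rpow_sub_rpow_le {θ θ' : ℝ → ℝ} {a c x y m : ℝ}
    (hθ : ∀ t ∈ Icc a c, HasDerivAt θ (θ' t) t) (hθ' : ContinuousOn θ' (Icc a c))
    (hθpos : ∀ t ∈ Icc a c, 0 < θ t) (hx : x ∈ Icc a c) (hy : y ∈ Icc a c) :
    |θ x ^ m - θ y ^ m| ≤ |m| * ∫ t in Icc a c, θ t ^ (m - 1) * |θ' t| := by
  have hθc : ContinuousOn θ (Icc a c) := fun t ht => (hθ t ht).continuousAt.continuousWithinAt
  have hne : ∀ t ∈ Icc a c, θ t ≠ 0 := fun t ht => (hθpos t ht).ne'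
  calc |θ x ^ m - θ y ^ m| ≤ ∫ t in Icc a c, |θ' t * m * θ t ^ (m - 1)| :=
        abs_sub_le_setIntegral_Icc_abs_deriv (fun t ht => (hθ t ht).rpow_const (.inl (hne t ht)))
          ((hθ'.mul continuousOn_const).mul
            (hθc.rpow_const fun t ht => .inl (hne t ht))).integrableOn_Icc hx hy
    _ = |m| * ∫ t in Icc a c, θ t ^ (m - 1) * |θ' t| := by
        rw [← integral_const_mul]
        refine setIntegral_congr_fun measurableSet_Icc fun t ht => ?_
        rw [abs_mul, abs_mul, abs_of_pos (Real.rpow_pos_of_pos (hθpos t ht) _)]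
        ring

theorem temperature_oscillation_bound_general
    (m b κ₁ κ₂ B M₁ M₂ V₁ L : ℝ)
    (hm0 : 0 ≤ m) (hm : m ≤ (b + 4) / 2)
    (hκ₁ : 0 < κ₁) (hκ₂ : 0 < κ₂)
    (hV₁ : 0 < V₁) :
    ∃ C > 0, ∀ (a c : ℝ) (v θ θ' : ℝ → ℝ) (b₀ : ℝ),
      a ≤ c → c - a ≤ L →
      (∀ x ∈ Icc a c, HasDerivAt θ (θ' x) x) →
      ContinuousOn θ' (Icc a c) →
      (∀ x ∈ Icc a c, 0 < θ x) →
      (∀ x ∈ Icc a c, V₁ ≤ v x) →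
      IntegrableOn v (Icc a c) →
      (∫ x in Icc a c, v x) ≤ M₁ →
      IntegrableOn (fun x => (θ x - 1) ^ 4) (Icc a c) →
      (∫ x in Icc a c, (θ x - 1) ^ 4) ≤ M₂ →
      b₀ ∈ Icc a c → θ b₀ ≤ B →
      ∀ x ∈ Icc a c,
        |θ x ^ m - θ b₀ ^ m| ≤
          C * Real.sqrt (∫ x in Icc a c,
            (κ₁ + κ₂ * v x * θ x ^ b) * (θ' x) ^ 2 / (v x * θ x ^ 2)) := by
  set K := 2 ^ (2 * m) / κ₁ * M₁ + 16 / κ₂ * M₂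
  refine ⟨m * √K + 1, by positivity, ?_⟩
  intro a c v θ θ' b₀ _ _ hθ hθ' hθ0 hv hvint hvM hθ4 hθ4M hb₀ _ x hx
  have hv0 : ∀ y ∈ Icc a c, 0 < v y := fun y hy => hV₁.trans_le (hv y hy)
  have hθc : ContinuousOn θ (Icc a c) := fun y hy => (hθ y hy).continuousAt.continuousWithinAt
  have hIcc : ∀ᵐ y ∂volume.restrict (Icc a c), y ∈ Icc a c := ae_restrict_mem measurableSet_Icc
  obtain ⟨hPint, hPle⟩ := integrable_and_integral_mul_rpow_div_add_le (b := b) (p := 2 * m)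
    (by positivity) (by linarith) hκ₁ hκ₂ (hIcc.mono fun y hy => (hv0 y hy).le) (hIcc.mono hθ0) hvint
    (hθc.aemeasurable measurableSet_Icc) hθ4
  have hQint := integrableOn_conductivity_mul_sq_div (b := b) hκ₁.le hκ₂.le hV₁ hv
    hvint.aemeasurable hθc hθ0 hθ'
  set D := ∫ t in Icc a c, (κ₁ + κ₂ * v t * θ t ^ b) * θ' t ^ 2 / (v t * θ t ^ 2)
  calc |θ x ^ m - θ b₀ ^ m| ≤ m * ∫ t in Icc a c, θ t ^ (m - 1) * |θ' t| := by
        simpa only [abs_of_nonneg hm0] using abs_rpow_sub_rpow_le (m := m) hθ hθ' hθ0 hx hb₀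
    _ ≤ m * (√(∫ t in Icc a c, v t * θ t ^ (2 * m) / (κ₁ + κ₂ * v t * θ t ^ b)) * √D) := by
        gcongr
        refine setIntegral_rpow_sub_one_mul_abs_le measurableSet_Icc (fun y hy => ?_) hv0 hθ0
          hPint hQint
        have := hv0 y hy; have := hθ0 y hy
        positivity
    _ ≤ m * (√K * √D) := by
        gcongr
        refine hPle.trans (add_le_add ?_ ?_) <;> gcongr
    _ ≤ _ := by
        rw [← mul_assoc, add_mul, one_mul]; exact le_add_of_nonneg_right (Real.sqrt_nonneg _)

/-- Corollary 2.5 of the paper: pointwise oscillation bound for powers of the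
temperature in terms of the entropy dissipation, on a bounded interval `Ω = [a,c]`
of length at most `L`, when `0 ≤ m ≤ (b+4)/2`. -/
theorem temperature_oscillation_bound
    (m b κ₁ κ₂ B M₁ M₂ V₁ L : ℝ)
    (hb : 0 < b) (hm0 : 0 ≤ m) (hm : m ≤ (b + 4) / 2)
    (hκ₁ : 0 < κ₁) (hκ₂ : 0 < κ₂) (hB : 0 < B)
    (hM₁ : 0 < M₁) (hM₂ : 0 < M₂) (hV₁ : 0 < V₁) (hL : 0 < L) :
    ∃ C > 0, ∀ (a c : ℝ) (v θ θ' : ℝ → ℝ) (b₀ : ℝ),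
      a ≤ c → c - a ≤ L →
      (∀ x ∈ Icc a c, HasDerivAt θ (θ' x) x) →
      ContinuousOn θ' (Icc a c) →
      (∀ x ∈ Icc a c, 0 < θ x) →
      (∀ x ∈ Icc a c, V₁ ≤ v x) →
      IntegrableOn v (Icc a c) →
      (∫ x in Icc a c, v x) ≤ M₁ →
      IntegrableOn (fun x => (θ x - 1) ^ 4) (Icc a c) →
      (∫ x in Icc a c, (θ x - 1) ^ 4) ≤ M₂ →
      b₀ ∈ Icc a c → θ b₀ ≤ B →
      ∀ x ∈ Icc a c,
        |θ x ^ m - θ b₀ ^ m| ≤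
          C * Real.sqrt (∫ x in Icc a c,
            (κ₁ + κ₂ * v x * θ x ^ b) * (θ' x) ^ 2 / (v x * θ x ^ 2)) :=
  temperature_oscillation_bound_general m b κ₁ κ₂ B M₁ M₂ V₁ L hm0 hm hκ₁ hκ₂ hV₁
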